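/- Let R be a commutative Noetherian ring and J an ideal with only finitely many minimal primes p_1, ..., p_r, all of the same height i. Let S ⊆ {1,...,r} and K = ∩_{s ∉ S} p_s (with K = R if S = {1,...,r}). Then the minimal primes of J : K^∞ of height i are exactly {p_s : s ∈ S}, provided p_s ⊉ K for all s ∈ S. -/

import Mathlib

/-- The saturation `J : K^∞ = ⋃ₙ (J : Kⁿ)`. -/
noncomputable def idealSaturation {R : Type*} [CommRing R] (J K : Ideal R) : Ideal R :=
  ⨆ n : ℕ, Submodule.colon J ((K ^ n : Ideal R) : Set R)

/-!
In a Noetherian ring, `x ∈ √(J : K^∞)` as soon as `x K ⊆ √J`, because some power of the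
finitely generated ideal `x K` lies in `J`. Conversely `J : K^∞` lies in every prime that
contains `J` but not `K`. Hence `√(J : K^∞)` is the intersection of the minimal primes of `J`
not containing `K`, and these finitely many primes are exactly the minimal primes of `J : K^∞`.
With `K = ⋂_{s ∉ S} p_s`, the minimal primes of `J` not containing `K` are the `p_s`, `s ∈ S`.
-/

namespace Ideal

variable {R : Type*} [CommRing R] {J K P : Ideal R}

lemma le_idealSaturation : J ≤ idealSaturation J K :=
  le_colon.trans (le_iSup (fun n : ℕ => Submodule.colon J ((K ^ n : Ideal R) : Set R)) 0)

lemma idealSaturation_le_of_not_le [hP : P.IsPrime] (hJ : J ≤ P) (hK : ¬K ≤ P) :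
    idealSaturation J K ≤ P := by
  obtain ⟨k, hkK, hkP⟩ := SetLike.not_le_iff_exists.mp hK
  refine iSup_le fun n x hx => ?_
  have hxk : x * k ^ n ∈ P := hJ (Submodule.mem_colon.mp hx _ (pow_mem_pow hkK n))
  exact (hP.mem_or_mem hxk).resolve_right (mt (hP.mem_of_pow_mem n) hkP)

lemma mem_radical_idealSaturation [IsNoetherianRing R] {x : R} (h : span {x} * K ≤ J.radical) :
    x ∈ (idealSaturation J K).radical := by
  obtain ⟨n, hn⟩ := exists_pow_le_of_le_radical_of_fg h (IsNoetherian.noetherian _)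
  refine ⟨n, le_iSup (fun n : ℕ => Submodule.colon J ((K ^ n : Ideal R) : Set R)) n ?_⟩
  refine Submodule.mem_colon.mpr fun y hy => hn ?_
  rw [mul_pow, span_singleton_pow]
  exact mul_mem_mul (mem_span_singleton_self _) hy

theorem radical_idealSaturation [IsNoetherianRing R] :
    (idealSaturation J K).radical = sInf {P ∈ J.minimalPrimes | ¬K ≤ P} := by
  refine le_antisymm (le_sInf fun P ⟨hP, hKP⟩ => ?_) fun x hx => mem_radical_idealSaturation ?_
  · have := hP.1.1
    exact this.radical_le_iff.mpr (idealSaturation_le_of_not_le hP.1.2 hKP)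
  · rw [← sInf_minimalPrimes]
    refine le_sInf fun P hP => ?_
    by_cases hKP : K ≤ P
    · exact mul_le_right.trans hKP
    · exact mul_le_left.trans (span_le.mpr (Set.singleton_subset_iff.mpr
        (Submodule.mem_sInf.mp hx P ⟨hP, hKP⟩)))

theorem minimalPrimes_idealSaturation [IsNoetherianRing R] :
    (idealSaturation J K).minimalPrimes = {P ∈ J.minimalPrimes | ¬K ≤ P} := by
  ext Q
  constructor
  · intro hQ
    have hfin : {P ∈ J.minimalPrimes | ¬K ≤ P}.Finite :=
      (finite_minimalPrimes_of_isNoetherianRing R J).subset (Set.sep_subset _ _)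
    have hle : sInf {P ∈ J.minimalPrimes | ¬K ≤ P} ≤ Q := by
      rw [← radical_idealSaturation]
      exact hQ.1.1.radical_le_iff.mpr hQ.1.2
    rw [← hfin.coe_toFinset, ← hfin.toFinset.inf_id_eq_sInf, hQ.1.1.inf_le'] at hle
    obtain ⟨P, hP, hPQ⟩ := hle
    rw [Set.Finite.mem_toFinset] at hP
    have hPprime := hP.1.1.1
    rwa [le_antisymm (hQ.2 ⟨hPprime, idealSaturation_le_of_not_le hP.1.1.2 hP.2⟩ hPQ) hPQ]
  · rintro ⟨hQ, hKQ⟩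
    have := hQ.1.1
    exact ⟨⟨this, idealSaturation_le_of_not_le hQ.1.2 hKQ⟩,
      fun P hP hPQ => hQ.2 ⟨hP.1, le_idealSaturation.trans hP.2⟩ hPQ⟩

end Ideal

theorem stmt9_general (R : Type*) [CommRing R] [IsNoetherianRing R]
    (J : Ideal R) (r : ℕ) (i : ℕ) (p : Fin r → PrimeSpectrum R)
    (hmin : {q : PrimeSpectrum R | q.asIdeal ∈ J.minimalPrimes} = Set.range p)
    (hht : ∀ s, Order.height (p s) = (i : ℕ∞))
    (S : Finset (Fin r))
    (K : Ideal R) (hK : K = ⨅ s ∈ Sᶜ, (p s).asIdeal)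
    (hKS : ∀ s ∈ S, ¬ K ≤ (p s).asIdeal) :
    {q : PrimeSpectrum R |
        q.asIdeal ∈ (idealSaturation J K).minimalPrimes ∧ Order.height q = (i : ℕ∞)} =
      p '' ↑S := by
  have hpmin (q : PrimeSpectrum R) : q.asIdeal ∈ J.minimalPrimes ↔ ∃ t, p t = q :=
    Set.ext_iff.mp hmin q
  have hmem_of_not_le (t : Fin r) (hKt : ¬K ≤ (p t).asIdeal) : t ∈ S := by
    by_contra ht
    exact hKt (hK ▸ iInf₂_le t (Finset.mem_compl.mpr ht))
  ext q
  rw [Set.mem_ofPred_eq, Ideal.minimalPrimes_idealSaturation, Set.mem_sep_iff, hpmin]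
  constructor
  · rintro ⟨⟨⟨t, rfl⟩, hKt⟩, -⟩
    exact ⟨t, hmem_of_not_le t hKt, rfl⟩
  · rintro ⟨s, hs, rfl⟩
    exact ⟨⟨⟨s, rfl⟩, hKS s hs⟩, hht s⟩

/-- Let `R` be a commutative Noetherian ring and `J` an ideal whose minimal primes are
exactly the pairwise distinct primes `p_1, …, p_r`, all of height `i`.  Let
`S ⊆ {1, …, r}` and `K = ⋂_{s ∉ S} p_s` (with `K = R` if `S = {1,…,r}`).  If `p_s ⊉ K`
for all `s ∈ S`, then the minimal primes of `J : K^∞` of height `i` are exactly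
`{p_s : s ∈ S}`. -/
theorem stmt9 (R : Type*) [CommRing R] [IsNoetherianRing R]
    (J : Ideal R) (r : ℕ) (i : ℕ) (p : Fin r → PrimeSpectrum R)
    (hinj : Function.Injective p)
    (hmin : {q : PrimeSpectrum R | q.asIdeal ∈ J.minimalPrimes} = Set.range p)
    (hht : ∀ s, Order.height (p s) = (i : ℕ∞))
    (S : Finset (Fin r))
    (K : Ideal R) (hK : K = ⨅ s ∈ Sᶜ, (p s).asIdeal)
    (hKS : ∀ s ∈ S, ¬ K ≤ (p s).asIdeal) :
    {q : PrimeSpectrum R |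
        q.asIdeal ∈ (idealSaturation J K).minimalPrimes ∧ Order.height q = (i : ℕ∞)} =
      p '' ↑S :=
  stmt9_general R J r i p hmin hht S K hK hKS
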